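/- The ratio r(α) = p(α+1)/p(α) = e·α·(α − 1/3)^{α − 1/2}/(α + 2/3)^{α + 1/2} satisfies r(α) > 1 for all real α ≥ 1, where p(α) = e^{α−1/3}√(α−1/3)Γ(α)/(√(2π)(α−1/3)^α). -/

import Mathlib

/-! The functional equation `Γ(α+1) = αΓ(α)` turns `p(α+1)/p(α)` into the closed form
`r(α)`. With `t = 1/(3α) ∈ (0, 1/3]`,
`6t · log r(α) = 6t + (2 - 3t) log(1 - t) - (2 + 3t) log(1 + 2t)`.
Bounding `log(1 - t)` below by its Taylor polynomial of degree 3 minus `3t⁴/2`, and `log(1 + u)`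
above by its Taylor polynomial of degree 5, leaves `3t³/2 - 2t⁴ + 37t⁵/10 - 96t⁶/5`, which is
positive on `(0, 1/3]`. -/

/-- `p(α) = e^{α−1/3} √(α−1/3) Γ(α) / (√(2π) (α−1/3)^α)`. -/
noncomputable def pFun (α : ℝ) : ℝ :=
  Real.exp (α - 1/3) * Real.sqrt (α - 1/3) * Real.Gamma α /
    (Real.sqrt (2 * Real.pi) * (α - 1/3) ^ α)

open Real Set

noncomputable def pRatio (α : ℝ) : ℝ :=
  exp 1 * α * (α - 1/3) ^ (α - 1/2) / (α + 2/3) ^ (α + 1/2)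

lemma sqrt_div_rpow {x : ℝ} (hx : 0 < x) (β : ℝ) : √x / x ^ β = (x ^ (β - 1/2))⁻¹ := by
  rw [sqrt_eq_rpow, ← rpow_sub hx, ← rpow_neg hx.le]
  ring_nf

lemma pFun_eq {α : ℝ} (hα : 1/3 < α) :
    pFun α = exp (α - 1/3) * Gamma α / (√(2 * π) * (α - 1/3) ^ (α - 1/2)) := by
  have h := sqrt_div_rpow (sub_pos.mpr hα) α
  rw [pFun, show ∀ e s g r q : ℝ, e * s * g / (r * q) = e * g / r * (s / q) by intros; ring, h]
  ring

lemma pFun_add_one_div_pFun {α : ℝ} (hα : 1/3 < α) : pFun (α + 1) / pFun α = pRatio α := by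
  have hα' : 1/3 < α + 1 := by linarith
  rw [pRatio, pFun_eq hα, pFun_eq hα', Gamma_add_one (by positivity),
    show α + 1 - 1/3 = α + 2/3 by ring, show α + 1 - 1/2 = α + 1/2 by ring,
    show α + 2/3 = 1 + (α - 1/3) by ring, exp_add]
  have : 0 < Gamma α := Gamma_pos_of_pos (by linarith)
  have : 0 < (α - 1/3) ^ (α - 1/2) := rpow_pos_of_pos (by linarith) _
  field_simp

lemma log_one_add_le_quintic {u : ℝ} (hu : 0 ≤ u) :
    log (1 + u) ≤ u - u^2/2 + u^3/3 - u^4/4 + u^5/5 := by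
  let F : ℝ → ℝ := fun x => x - x^2/2 + x^3/3 - x^4/4 + x^5/5 - log (1 + x)
  have hF' : ∀ x, 0 ≤ x → HasDerivAt F (x^5 / (1 + x)) x := fun x hx => by
    have := (((((hasDerivAt_id x).sub ((hasDerivAt_pow 2 x).div_const 2)).add
      ((hasDerivAt_pow 3 x).div_const 3)).sub ((hasDerivAt_pow 4 x).div_const 4)).add
      ((hasDerivAt_pow 5 x).div_const 5)).sub (((hasDerivAt_id x).const_add 1).log (by positivity))
    refine this.congr_deriv ?_
    have : 1 + x ≠ 0 := by positivity
    simp only [id]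
    field_simp
    ring
  have hmono : MonotoneOn F (Ici 0) := by
    refine monotoneOn_of_hasDerivWithinAt_nonneg (convex_Ici 0)
      (fun x hx => (hF' x hx).continuousAt.continuousWithinAt)
      (fun x hx => (hF' x (interior_subset hx)).hasDerivWithinAt) fun x hx => ?_
    rw [interior_Ici, mem_Ioi] at hx
    positivity
  have := hmono self_mem_Ici (mem_Ici.mpr hu) hu
  simp only [F] at this
  norm_num at this
  linarith

lemma quartic_le_log_one_sub {t : ℝ} (ht₀ : 0 ≤ t) (ht : t ≤ 1/3) :
    -t - t^2/2 - t^3/3 - 3/2 * t^4 ≤ log (1 - t) := by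
  have h := abs_log_sub_add_sum_range_le (x := t) (by rw [abs_of_nonneg ht₀]; linarith) 3
  simp only [Finset.sum_range_succ, Finset.sum_range_zero, abs_of_nonneg ht₀] at h
  norm_num at h
  have htail : t^4 / (1 - t) ≤ 3/2 * t^4 := by
    rw [div_le_iff₀ (by linarith)]
    nlinarith [pow_nonneg ht₀ 4]
  linarith [(abs_le.mp h).1]

lemma log_pRatio {α : ℝ} (hα : 1/3 < α) :
    log (pRatio α) =
      1 + (α - 1/2) * log (1 - (3 * α)⁻¹) - (α + 1/2) * log (1 + 2 * (3 * α)⁻¹) := by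
  have hα₀ : 0 < α := by linarith
  have hx : 0 < 1 - (3 * α)⁻¹ := by
    rw [sub_pos, inv_lt_one₀ (by positivity)]; linarith
  have hy : 0 < 1 + 2 * (3 * α)⁻¹ := by positivity
  have hx' : α - 1/3 = α * (1 - (3 * α)⁻¹) := by field_simp
  have hy' : α + 2/3 = α * (1 + 2 * (3 * α)⁻¹) := by field_simp
  rw [pRatio, hx', hy', log_div (by positivity) (by positivity), log_mul (by positivity)
    (by positivity), log_mul (by positivity) hα₀.ne', log_exp, log_rpow (by positivity),
    log_rpow (by positivity), log_mul hα₀.ne' hx.ne', log_mul hα₀.ne' hy.ne']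
  ring

lemma log_one_add_two_mul_lt {t : ℝ} (ht₀ : 0 < t) (ht : t ≤ 1/3) :
    (2 + 3 * t) * log (1 + 2 * t) < 6 * t + (2 - 3 * t) * log (1 - t) := by
  have hU := log_one_add_le_quintic (u := 2 * t) (by positivity)
  have hL := quartic_le_log_one_sub ht₀.le ht
  have hU' := mul_le_mul_of_nonneg_left hU (by positivity : (0:ℝ) ≤ 2 + 3 * t)
  have hL' := mul_le_mul_of_nonneg_left hL (by linarith : (0:ℝ) ≤ 2 - 3 * t)
  have hpoly : 0 < 3/2 * t^3 - 2 * t^4 + 37/10 * t^5 - 96/5 * t^6 := by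
    have : 0 < 3/2 - 2 * t + 37/10 * t^2 - 96/5 * t^3 := by
      nlinarith [pow_le_pow_left₀ ht₀.le ht 3]
    nlinarith [pow_pos ht₀ 3]
  linarith

lemma one_lt_pRatio {α : ℝ} (hα : 1 ≤ α) : 1 < pRatio α := by
  have hα₀ : 0 < α := by linarith
  have hpos : 0 ≤ pRatio α := div_nonneg
    (mul_nonneg (by positivity) (rpow_nonneg (by linarith) _)) (rpow_nonneg (by linarith) _)
  rw [← log_pos_iff hpos, log_pRatio (by linarith)]
  set t := (3 * α)⁻¹ with ht_def
  have ht₀ : 0 < t := by positivity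
  have ht : t ≤ 1/3 := by rw [ht_def, inv_le_comm₀ (by positivity) (by norm_num)]; linarith
  have hαt : α = (3 * t)⁻¹ := by rw [ht_def]; field_simp
  have key := log_one_add_two_mul_lt ht₀ ht
  have hscale : 6 * t * (1 + (α - 1/2) * log (1 - t) - (α + 1/2) * log (1 + 2 * t)) =
      6 * t + (2 - 3 * t) * log (1 - t) - (2 + 3 * t) * log (1 + 2 * t) := by
    rw [hαt]; field_simp; ring
  exact pos_of_mul_pos_right (hscale ▸ sub_pos.2 key) (by positivity)

/-- The ratio `r(α) = p(α+1)/p(α)` equals `e·α·(α−1/3)^{α−1/2}/(α+2/3)^{α+1/2}` and is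
greater than `1` for all real `α ≥ 1`. -/
theorem ratio_gt_one (α : ℝ) (hα : 1 ≤ α) :
    pFun (α + 1) / pFun α =
      Real.exp 1 * α * (α - 1/3) ^ (α - 1/2) / (α + 2/3) ^ (α + 1/2) ∧
    1 < Real.exp 1 * α * (α - 1/3) ^ (α - 1/2) / (α + 2/3) ^ (α + 1/2) :=
  ⟨pFun_add_one_div_pFun (by linarith), one_lt_pRatio hα⟩
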